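/- arXiv:2512.18378 — 2 statements merged into one kernel-verified Lean document; each statement's English description precedes it below -/
import Mathlib

section
/- Let G be a strong 2-central (bicentral) 2-tree on n ≥ 4 vertices with maximum degree Δ and tail set {2,3}, with x tail vertices of degree 3. The following are equivalent: (i) x = 0; (ii) Δ = n − 1; (iii) G is isomorphic to the triangular book graph B_{n−2}. Consequently, B_{n−2} is the unique strong bicentral 2-tree with degree sequence (n−1, n−1, 2^(n−2)). -/
open SimpleGraph

/-- `IsTwoTree G` : `G` is a 2-tree, i.e. it can be built recursively starting from the
complete graph `K₃` by repeatedly adding a new vertex adjacent exactly to the two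
endpoints of an existing edge.  This is encoded via a construction ordering of the
vertices: the first three vertices form a triangle, and every later vertex has exactly
two earlier neighbors, which are adjacent. -/
def IsTwoTree {V : Type} [Fintype V] (G : SimpleGraph V) : Prop :=
  3 ≤ Fintype.card V ∧
  ∃ e : Fin (Fintype.card V) ≃ V,
    (∀ i j : Fin (Fintype.card V), i.val < 3 → j.val < 3 → i ≠ j → G.Adj (e i) (e j)) ∧
    (∀ k : Fin (Fintype.card V), 3 ≤ k.val →
      ∃ i j : Fin (Fintype.card V), i.val < k.val ∧ j.val < k.val ∧ i ≠ j ∧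
        G.Adj (e i) (e j) ∧
        ∀ m : Fin (Fintype.card V), m.val < k.val →
          (G.Adj (e k) (e m) ↔ m = i ∨ m = j))

/-- The degree of a vertex. -/
noncomputable def gdeg {V : Type} [Fintype V] (G : SimpleGraph V) (v : V) : ℕ :=
  (G.neighborSet v).ncard

/-- `IsStrongCentral G r Δ` : `G` is a strong `r`-central 2-tree with maximum degree `Δ`
and tail set `{2,3}` :  `G` is a 2-tree, `Δ` is the maximum degree, exactly `r` vertices
have degree `Δ`, these `r` core vertices induce a complete graph, and every remaining
(tail) vertex has degree 2 or 3. -/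
def IsStrongCentral {V : Type} [Fintype V] (G : SimpleGraph V) (r Δ : ℕ) : Prop :=
  IsTwoTree G ∧
  (∀ v, gdeg G v ≤ Δ) ∧
  ({v | gdeg G v = Δ}).ncard = r ∧
  (∀ u v, gdeg G u = Δ → gdeg G v = Δ → u ≠ v → G.Adj u v) ∧
  (∀ v, gdeg G v ≠ Δ → gdeg G v = 2 ∨ gdeg G v = 3)

/-- The number `x` of tail vertices of degree 3. -/
noncomputable def tail3 {V : Type} [Fintype V] (G : SimpleGraph V) (Δ : ℕ) : ℕ :=
  ({v | gdeg G v ≠ Δ ∧ gdeg G v = 3}).ncard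

/-- The number `y` of tail vertices of degree 2. -/
noncomputable def tail2 {V : Type} [Fintype V] (G : SimpleGraph V) (Δ : ℕ) : ℕ :=
  ({v | gdeg G v ≠ Δ ∧ gdeg G v = 2}).ncard

/-- The triangular book graph `B_m` on `m+2` vertices: `m` triangles all sharing the
common edge between vertices `0` and `1`. -/
def bookGraph (m : ℕ) : SimpleGraph (Fin (m + 2)) :=
  SimpleGraph.fromRel (fun u _ => u.val < 2)
lemma gdeg_le {V : Type} [Fintype V] (G : SimpleGraph V) (v : V) :
    gdeg G v ≤ Fintype.card V - 1 := by
  classical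
  have h1 : G.neighborSet v ⊆ Set.univ \ {v} := by
    intro w hw
    refine ⟨trivial, ?_⟩
    simp only [Set.mem_singleton_iff]
    rintro rfl; exact G.irrefl hw
  have h2 : (Set.univ \ {v} : Set V).ncard = Fintype.card V - 1 := by
    rw [Set.ncard_diff_singleton_of_mem (Set.mem_univ v), Set.ncard_univ, Nat.card_eq_fintype_card]
  calc gdeg G v ≤ (Set.univ \ {v} : Set V).ncard := Set.ncard_le_ncard h1 (Set.toFinite _)
  _ = _ := h2

lemma adj_of_gdeg_max {V : Type} [Fintype V] (G : SimpleGraph V) (v w : V)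
    (hd : gdeg G v = Fintype.card V - 1) (hw : w ≠ v) : G.Adj v w := by
  classical
  have h1 : G.neighborSet v ⊆ Set.univ \ {v} := by
    intro u hu
    refine ⟨trivial, ?_⟩
    simp only [Set.mem_singleton_iff]
    rintro rfl; exact G.irrefl hu
  have h2 : (Set.univ \ {v} : Set V).ncard = Fintype.card V - 1 := by
    rw [Set.ncard_diff_singleton_of_mem (Set.mem_univ v), Set.ncard_univ, Nat.card_eq_fintype_card]
  have heq : G.neighborSet v = Set.univ \ {v} :=
    Set.eq_of_subset_of_ncard_le h1 (by unfold gdeg at hd; omega) (Set.toFinite _)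
  have : w ∈ G.neighborSet v := by
    rw [heq]; exact ⟨trivial, by simpa using hw⟩
  exact this

lemma gdeg_iso {V W : Type} [Fintype V] [Fintype W] {G : SimpleGraph V} {H : SimpleGraph W}
    (φ : G ≃g H) (v : V) : gdeg G v = gdeg H (φ v) := by
  unfold gdeg
  rw [← Nat.card_coe_set_eq, ← Nat.card_coe_set_eq]
  exact Nat.card_congr (φ.mapNeighborSet v)
lemma sum_min_two : ∀ N, 3 ≤ N → ∑ i ∈ Finset.range N, min i 2 = 2 * N - 3 := by
  intro N hN
  induction N with
  | zero => omega
  | succ k ih =>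
    rcases Nat.lt_or_ge k 3 with hk | hk
    · have : k = 2 := by omega
      subst this; decide
    · rw [Finset.sum_range_succ, ih (by omega)]
      have : min k 2 = 2 := by omega
      omega

lemma sum_gdeg {V : Type} [Fintype V] (G : SimpleGraph V) (h : IsTwoTree G) :
    ∑ v, gdeg G v = 4 * Fintype.card V - 6 := by
  classical
  obtain ⟨hn3, e, htri, hrec⟩ := h
  have hdeg : ∀ j, gdeg G (e j) =
      (Finset.univ.filter fun m => G.Adj (e j) (e m)).card := by
    intro j
    have himg : G.neighborSet (e j) = e '' {m | G.Adj (e j) (e m)} := by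
      ext w
      constructor
      · intro hw; exact ⟨e.symm w, by simpa using hw, by simp⟩
      · rintro ⟨m, hm, rfl⟩; exact hm
    rw [gdeg, himg, Set.ncard_image_of_injective _ e.injective,
      Set.ncard_eq_toFinset_card', Set.toFinset_setOf]
  have hsplit : ∀ j,
      (Finset.univ.filter fun m => G.Adj (e j) (e m)).card =
      (Finset.univ.filter fun m => m < j ∧ G.Adj (e j) (e m)).card +
      (Finset.univ.filter fun m => j < m ∧ G.Adj (e j) (e m)).card := by
    intro j
    simp only [Finset.card_filter]
    rw [← Finset.sum_add_distrib]
    apply Finset.sum_congr rfl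
    intro m _
    by_cases ha : G.Adj (e j) (e m)
    · have hne : m ≠ j := by rintro rfl; exact G.irrefl ha
      rcases hne.lt_or_gt with hlt | hlt
      · simp [ha, hlt, Fin.lt_asymm hlt]
      · simp [ha, hlt, Fin.lt_asymm hlt]
    · simp [ha]
  have hswap : ∑ j, (Finset.univ.filter fun m => j < m ∧ G.Adj (e j) (e m)).card =
      ∑ j, (Finset.univ.filter fun m => m < j ∧ G.Adj (e j) (e m)).card := by
    simp only [Finset.card_filter]
    rw [Finset.sum_comm]
    apply Finset.sum_congr rfl
    intro m _
    apply Finset.sum_congr rfl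
    intro j _
    exact if_congr (and_congr_right fun _ => G.adj_comm _ _) rfl rfl
  have hA : ∀ j, (Finset.univ.filter fun m => m < j ∧ G.Adj (e j) (e m)).card
      = min j.val 2 := by
    intro j
    rcases Nat.lt_or_ge j.val 3 with hj | hj
    · have hcases : j.val = 0 ∨ j.val = 1 ∨ j.val = 2 := by omega
      rcases hcases with h0 | h1 | h2
      · have hfil : (Finset.univ.filter fun m => m < j ∧ G.Adj (e j) (e m)) = ∅ := by
          ext m; simp [Fin.lt_def, h0]
        rw [hfil, Finset.card_empty]; omega
      · have hfil : (Finset.univ.filter fun m => m < j ∧ G.Adj (e j) (e m)) =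
            {(⟨0, by omega⟩ : Fin (Fintype.card V))} := by
          ext m
          simp only [Finset.mem_filter, Finset.mem_univ, true_and, Finset.mem_singleton]
          constructor
          · rintro ⟨hm, -⟩
            rw [Fin.lt_def, h1] at hm
            exact Fin.ext (by simp; omega)
          · rintro rfl
            refine ⟨by simp [Fin.lt_def, h1], htri j _ (by omega) (by simp) ?_⟩
            intro hc; rw [hc] at h1; simp at h1
        rw [hfil, Finset.card_singleton]; omega
      · have hfil : (Finset.univ.filter fun m => m < j ∧ G.Adj (e j) (e m)) =
            {(⟨0, by omega⟩ : Fin (Fintype.card V)), (⟨1, by omega⟩ : Fin (Fintype.card V))} := by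
          ext m
          simp only [Finset.mem_filter, Finset.mem_univ, true_and, Finset.mem_insert,
            Finset.mem_singleton]
          constructor
          · rintro ⟨hm, -⟩
            rw [Fin.lt_def, h2] at hm
            rcases (by omega : m.val = 0 ∨ m.val = 1) with h | h
            · exact Or.inl (Fin.ext (by simp; omega))
            · exact Or.inr (Fin.ext (by simp; omega))
          · rintro (rfl | rfl)
            · refine ⟨by simp [Fin.lt_def, h2], htri j _ (by omega) (by simp) ?_⟩
              intro hc; rw [hc] at h2; simp at h2
            · refine ⟨by simp [Fin.lt_def, h2], htri j _ (by omega) (by simp) ?_⟩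
              intro hc; rw [hc] at h2; simp at h2
        rw [hfil, Finset.card_pair (by intro hc; exact absurd (congrArg Fin.val hc) (by simp))]
        omega
    · obtain ⟨i, i', hi, hi', hne, -, hch⟩ := hrec j hj
      have hfil : (Finset.univ.filter fun m => m < j ∧ G.Adj (e j) (e m)) = {i, i'} := by
        ext m
        simp only [Finset.mem_filter, Finset.mem_univ, true_and, Finset.mem_insert,
          Finset.mem_singleton]
        constructor
        · rintro ⟨hm, ha⟩; exact (hch m hm).1 ha
        · rintro (rfl | rfl)
          · exact ⟨hi, (hch _ hi).2 (Or.inl rfl)⟩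
          · exact ⟨hi', (hch _ hi').2 (Or.inr rfl)⟩
      rw [hfil, Finset.card_pair hne]
      omega
  have hsum1 : ∑ j, (Finset.univ.filter fun m => m < j ∧ G.Adj (e j) (e m)).card
      = 2 * Fintype.card V - 3 := by
    have hs := sum_min_two (Fintype.card V) hn3
    rw [← Fin.sum_univ_eq_sum_range (fun i => min i 2) (Fintype.card V)] at hs
    rw [← hs]
    exact Finset.sum_congr rfl fun j _ => hA j
  calc ∑ v, gdeg G v = ∑ j, gdeg G (e j) := (Equiv.sum_comp e (gdeg G)).symm
  _ = ∑ j, ((Finset.univ.filter fun m => m < j ∧ G.Adj (e j) (e m)).card +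
        (Finset.univ.filter fun m => j < m ∧ G.Adj (e j) (e m)).card) := by
      apply Finset.sum_congr rfl; intro j _; rw [hdeg j, hsplit j]
  _ = (2 * Fintype.card V - 3) + (2 * Fintype.card V - 3) := by
      rw [Finset.sum_add_distrib, hswap, hsum1]
  _ = 4 * Fintype.card V - 6 := by omega
lemma tail3_eq {V : Type} [Fintype V] (G : SimpleGraph V) (n Δ : ℕ)
    (hn : 4 ≤ n) (hcard : Fintype.card V = n) (h : IsStrongCentral G 2 Δ) :
    Δ ≤ n - 1 ∧ tail3 G Δ = 2 * n - 2 - 2 * Δ := by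
  classical
  obtain ⟨htt, hmax, hS, hadj, htail⟩ := h
  obtain ⟨a, b, hab, hSeq⟩ := Set.ncard_eq_two.mp hS
  have ha : gdeg G a = Δ := by
    have : a ∈ {v | gdeg G v = Δ} := by rw [hSeq]; left; rfl
    exact this
  have hΔle : Δ ≤ n - 1 := by
    have := gdeg_le G a
    rw [ha, hcard] at this
    exact this
  refine ⟨hΔle, ?_⟩
  have hsum : ∑ v, gdeg G v = 4 * n - 6 := by rw [sum_gdeg G htt, hcard]
  set P : V → Prop := fun v => gdeg G v = Δ with hP
  set Q : V → Prop := fun v => gdeg G v = 3 with hQ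
  have hS' : (Finset.univ.filter P).card = 2 := by
    rw [← Set.toFinset_setOf, ← Set.ncard_eq_toFinset_card']; exact hS
  have hx' : tail3 G Δ = (Finset.univ.filter fun v => ¬ P v ∧ Q v).card := by
    rw [tail3, ← Set.toFinset_setOf, ← Set.ncard_eq_toFinset_card']
  have hy : ∀ v, ¬ P v → ¬ Q v → gdeg G v = 2 := by
    intro v hvP hvQ
    rcases htail v hvP with h2 | h3
    · exact h2
    · exact absurd h3 hvQ
  -- split the vertex count
  have hcount : (Finset.univ.filter P).card + ((Finset.univ.filter fun v => ¬ P v ∧ Q v).card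
      + (Finset.univ.filter fun v => ¬ P v ∧ ¬ Q v).card) = n := by
    rw [← hcard, ← Finset.card_univ,
      ← Finset.card_filter_add_card_filter_not (s := Finset.univ) (p := P)]
    congr 1
    rw [← Finset.card_filter_add_card_filter_not
      (s := Finset.univ.filter fun v => ¬ P v) (p := Q)]
    congr 1 <;> rw [Finset.filter_filter]
  -- split the degree sum
  have hsplit : ∑ v, gdeg G v = (Finset.univ.filter P).card * Δ
      + ((Finset.univ.filter fun v => ¬ P v ∧ Q v).card * 3
      + (Finset.univ.filter fun v => ¬ P v ∧ ¬ Q v).card * 2) := by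
    rw [← Finset.sum_filter_add_sum_filter_not Finset.univ P (gdeg G)]
    congr 1
    · apply Finset.sum_const_nat
      intro v hv
      exact (Finset.mem_filter.mp hv).2
    · rw [← Finset.sum_filter_add_sum_filter_not (Finset.univ.filter fun v => ¬ P v) Q (gdeg G)]
      congr 1
      · rw [Finset.filter_filter]
        rw [show ∀ s : Finset V, (Finset.filter (fun v => ¬ P v ∧ Q v) s)
            = Finset.filter (fun a => ¬ P a ∧ Q a) s from fun _ => rfl]
        apply Finset.sum_const_nat
        intro v hv
        exact (Finset.mem_filter.mp hv).2.2
      · rw [Finset.filter_filter]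
        apply Finset.sum_const_nat
        intro v hv
        obtain ⟨-, hvP, hvQ⟩ := Finset.mem_filter.mp hv
        exact hy v hvP hvQ
  rw [hsum, hS'] at hsplit
  rw [hS'] at hcount
  rw [hx']
  omega

lemma book_iso {V : Type} [Fintype V] (G : SimpleGraph V) (n : ℕ)
    (hn : 4 ≤ n) (hcard : Fintype.card V = n) (h : IsStrongCentral G 2 (n - 1)) :
    Nonempty (G ≃g bookGraph (n - 2)) := by
  classical
  obtain ⟨hΔle, hx⟩ := tail3_eq G n (n - 1) hn hcard h
  obtain ⟨htt, hmax, hS, hadj, htail⟩ := h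
  obtain ⟨a, b, hab, hSeq⟩ := Set.ncard_eq_two.mp hS
  have ha : gdeg G a = n - 1 := by
    have : a ∈ {v | gdeg G v = n - 1} := by rw [hSeq]; left; rfl
    exact this
  have hb : gdeg G b = n - 1 := by
    have : b ∈ {v | gdeg G v = n - 1} := by rw [hSeq]; right; rfl
    exact this
  have htail0 : ∀ v, v ≠ a → v ≠ b → gdeg G v = 2 := by
    intro v hva hvb
    have hvΔ : gdeg G v ≠ n - 1 := by
      intro hc
      have hv : v ∈ {u | gdeg G u = n - 1} := hc
      rw [hSeq] at hv
      rcases hv with rfl | rfl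
      · exact hva rfl
      · exact hvb rfl
    rcases htail v hvΔ with h2 | h3
    · exact h2
    · exfalso
      have hx0 : tail3 G (n - 1) = 0 := by omega
      have hemp : ({u | gdeg G u ≠ (n - 1) ∧ gdeg G u = 3} : Set V) = ∅ :=
        (Set.ncard_eq_zero (Set.toFinite _)).mp hx0
      have : v ∈ ({u | gdeg G u ≠ (n - 1) ∧ gdeg G u = 3} : Set V) := ⟨hvΔ, h3⟩
      rw [hemp] at this
      exact this
  have haAdj : ∀ w, w ≠ a → G.Adj a w := fun w hw =>
    adj_of_gdeg_max G a w (by rw [ha, hcard]) hw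
  have hbAdj : ∀ w, w ≠ b → G.Adj b w := fun w hw =>
    adj_of_gdeg_max G b w (by rw [hb, hcard]) hw
  have htN : ∀ v, v ≠ a → v ≠ b → G.neighborSet v = {a, b} := by
    intro v hva hvb
    have hsub : ({a, b} : Set V) ⊆ G.neighborSet v := by
      rintro w (rfl | rfl)
      · exact (haAdj v hva).symm
      · exact (hbAdj v hvb).symm
    refine (Set.eq_of_subset_of_ncard_le hsub ?_ (Set.toFinite _)).symm
    rw [Set.ncard_pair hab]
    exact le_of_eq (htail0 v hva hvb)
  have hAdjIff : ∀ u v, G.Adj u v ↔ u ≠ v ∧ (u = a ∨ u = b ∨ v = a ∨ v = b) := by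
    intro u v
    constructor
    · intro huv
      refine ⟨G.ne_of_adj huv, ?_⟩
      by_contra hc
      push_neg at hc
      obtain ⟨hua, hub, hva, hvb⟩ := hc
      have hNu := htN u hua hub
      have hv : v ∈ G.neighborSet u := huv
      rw [hNu] at hv
      rcases hv with rfl | rfl
      · exact hva rfl
      · exact hvb rfl
    · rintro ⟨hne, (rfl | rfl | rfl | rfl)⟩
      · exact haAdj v (Ne.symm hne)
      · exact hbAdj v (Ne.symm hne)
      · exact (haAdj u hne).symm
      · exact (hbAdj u hne).symm
  -- build the isomorphism
  have hcard2 : Fintype.card V = (n - 2) + 2 := by omega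
  have hle2 : 2 ≤ (n - 2) + 2 := by omega
  set z0 : Fin ((n - 2) + 2) := ⟨0, by omega⟩ with hz0
  set z1 : Fin ((n - 2) + 2) := ⟨1, by omega⟩ with hz1
  obtain g := Fintype.equivFinOfCardEq hcard2
  set f1 : V ≃ Fin ((n - 2) + 2) := g.trans (Equiv.swap (g a) z0) with hf1
  set f : V ≃ Fin ((n - 2) + 2) := f1.trans (Equiv.swap (f1 b) z1) with hf
  have hf1a : f1 a = z0 := by simp [hf1]
  have hfb : f b = z1 := by simp [hf]
  have hz01 : z0 ≠ z1 := by
    intro hc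
    have := congrArg Fin.val hc
    simp [hz0, hz1] at this
  have hf1b : f1 b ≠ z0 := by
    rw [← hf1a]
    exact fun hc => hab.symm (f1.injective hc)
  have hfa : f a = z0 := by
    rw [hf]
    simp only [Equiv.trans_apply, hf1a]
    rw [Equiv.swap_apply_of_ne_of_ne (Ne.symm hf1b) hz01]
  have hlt : ∀ u, ((f u).val < 2 ↔ (u = a ∨ u = b)) := by
    intro u
    constructor
    · intro hu
      rcases (by omega : (f u).val = 0 ∨ (f u).val = 1) with hv | hv
      · left; apply f.injective; rw [hfa]; exact Fin.ext (by simp [hz0, hv])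
      · right; apply f.injective; rw [hfb]; exact Fin.ext (by simp [hz1, hv])
    · rintro (rfl | rfl)
      · rw [hfa]; simp [hz0]
      · rw [hfb]; simp [hz1]
  refine ⟨⟨f, ?_⟩⟩
  intro u v
  rw [bookGraph, SimpleGraph.fromRel_adj, hAdjIff]
  constructor
  · rintro ⟨hne, hor⟩
    refine ⟨fun hc => hne (congrArg f hc), ?_⟩
    rcases hor with hu | hv
    · rcases (hlt u).mp hu with rfl | rfl
      · left; rfl
      · right; left; rfl
    · rcases (hlt v).mp hv with rfl | rfl
      · right; right; left; rfl
      · right; right; right; rfl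
  · rintro ⟨hne, hor⟩
    refine ⟨fun hc => hne (f.injective hc), ?_⟩
    rcases hor with rfl | rfl | rfl | rfl
    · exact Or.inl ((hlt u).mpr (Or.inl rfl))
    · exact Or.inl ((hlt u).mpr (Or.inr rfl))
    · exact Or.inr ((hlt v).mpr (Or.inl rfl))
    · exact Or.inr ((hlt v).mpr (Or.inr rfl))

theorem stmt6 {V : Type} [Fintype V] (G : SimpleGraph V) (n Δ : ℕ)
    (hn : 4 ≤ n) (hcard : Fintype.card V = n)
    (h : IsStrongCentral G 2 Δ) :
    (tail3 G Δ = 0 ↔ Δ = n - 1) ∧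
    (Δ = n - 1 ↔ Nonempty (G ≃g bookGraph (n - 2))) ∧
    (∀ (W : Type) [Fintype W] (H : SimpleGraph W), Fintype.card W = n →
      IsStrongCentral H 2 (n - 1) → Nonempty (H ≃g bookGraph (n - 2))) := by
  obtain ⟨hΔle, hx⟩ := tail3_eq G n Δ hn hcard h
  refine ⟨by omega, ⟨?_, ?_⟩, fun W _ H hWcard hH => book_iso H n hn hWcard hH⟩
  · intro hΔ
    subst hΔ
    exact book_iso G n hn hcard h
  · rintro ⟨φ⟩
    classical
    have hn2 : (0 : ℕ) < (n - 2) + 2 := by omega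
    set v0 : Fin ((n - 2) + 2) := ⟨0, hn2⟩ with hv0
    have hNv0 : (bookGraph (n - 2)).neighborSet v0 = Set.univ \ {v0} := by
      ext w
      simp only [SimpleGraph.mem_neighborSet, bookGraph, SimpleGraph.fromRel_adj,
        Set.mem_diff, Set.mem_univ, true_and, Set.mem_singleton_iff]
      constructor
      · rintro ⟨hne, -⟩
        exact fun hc => hne hc.symm
      · intro hne
        exact ⟨fun hc => hne hc.symm, Or.inl (by simp [hv0])⟩
    have hdeg0 : gdeg (bookGraph (n - 2)) v0 = n - 1 := by
      rw [gdeg, hNv0, Set.ncard_diff_singleton_of_mem (Set.mem_univ v0),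
        Set.ncard_univ, Nat.card_eq_fintype_card, Fintype.card_fin]
      omega
    have hG : gdeg G (φ.symm v0) = n - 1 := by
      rw [gdeg_iso φ (φ.symm v0)]
      simp only [RelIso.apply_symm_apply]
      exact hdeg0
    have := h.2.1 (φ.symm v0)
    rw [hG] at this
    omega
end

section
/- Let G be a strong 2-central (bicentral) 2-tree on n ≥ 6 vertices with tail set {2,3} and exactly two degree-3 tail vertices. Let a, b be the core vertices, T = V(G) \ {a, b}, and S = N(a) ∩ N(b) ∩ T. Then |S| = n − 4. -/
open SimpleGraph

open Finset

lemma gdeg_eq {V : Type} [Fintype V] [DecidableEq V] (G : SimpleGraph V) [DecidableRel G.Adj] (v : V) :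
    gdeg G v = (univ.filter (G.Adj v)).card := by
  rw [gdeg, Set.ncard_eq_toFinset_card']
  simp

lemma twoTree_degsum {V : Type} [Fintype V] [DecidableEq V] (G : SimpleGraph V) [DecidableRel G.Adj]
    (h : IsTwoTree G) :
    ∑ v : V, gdeg G v = 2 * (2 * Fintype.card V - 3) := by
  set n := Fintype.card V with hn
  obtain ⟨h3, e, htri, hstep⟩ := h
  set dlt : Fin n → ℕ := fun j => (univ.filter (fun i => i < j ∧ G.Adj (e i) (e j))).card with hdlt
  set dgt : Fin n → ℕ := fun j => (univ.filter (fun i => j < i ∧ G.Adj (e i) (e j))).card with hdgt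
  have hsum : ∑ v : V, gdeg G v = ∑ j : Fin n, (univ.filter (fun i => G.Adj (e i) (e j))).card := by
    rw [← Equiv.sum_comp e (fun v => gdeg G v)]
    refine Finset.sum_congr rfl fun j _ => ?_
    rw [gdeg_eq]
    exact Finset.card_equiv e.symm (fun v => by simp [adj_comm])
  have hdsplit : ∀ j : Fin n, (univ.filter (fun i => G.Adj (e i) (e j))).card = dlt j + dgt j := by
    intro j
    rw [hdlt, hdgt]
    have : (univ.filter (fun i => G.Adj (e i) (e j)))
        = (univ.filter (fun i => i < j ∧ G.Adj (e i) (e j))) ∪ (univ.filter (fun i => j < i ∧ G.Adj (e i) (e j))) := by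
      ext i
      simp only [mem_filter, mem_union, mem_univ, true_and]
      constructor
      · intro hadj
        have hne : i ≠ j := fun hij => (G.loopless.irrefl _ (hij ▸ hadj))
        rcases lt_or_gt_of_ne hne with h1 | h1
        · exact Or.inl ⟨h1, hadj⟩
        · exact Or.inr ⟨h1, hadj⟩
      · rintro (⟨_, h2⟩ | ⟨_, h2⟩) <;> exact h2
    rw [this, Finset.card_union_of_disjoint]
    rw [Finset.disjoint_filter]
    rintro i _ ⟨h1, _⟩ ⟨h2, _⟩
    exact absurd (h1.trans h2) (lt_irrefl i)
  have hswap : ∑ j : Fin n, dgt j = ∑ j : Fin n, dlt j := by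
    simp only [hdlt, hdgt, Finset.card_filter]
    rw [Finset.sum_comm]
    refine Finset.sum_congr rfl fun i _ => Finset.sum_congr rfl fun j _ => ?_
    congr 1
    simp only [eq_iff_iff]
    constructor
    · rintro ⟨h1, h2⟩; exact ⟨h1, h2.symm⟩
    · rintro ⟨h1, h2⟩; exact ⟨h1, h2.symm⟩
  have hdlt_small : ∀ j : Fin n, j.val < 3 → dlt j = j.val := by
    intro j hj
    have : (univ.filter (fun i => i < j ∧ G.Adj (e i) (e j))) = Finset.Iio j := by
      ext i
      simp only [mem_filter, mem_univ, true_and, Finset.mem_Iio]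
      refine ⟨fun h => h.1, fun hij => ⟨hij, htri i j (lt_trans hij hj) hj (ne_of_lt hij)⟩⟩
    rw [hdlt]; simp only []; rw [this, Fin.card_Iio]
  have hdlt_big : ∀ j : Fin n, 3 ≤ j.val → dlt j = 2 := by
    intro j hj
    obtain ⟨i0, j0, hi0, hj0, hne, hadj, hchar⟩ := hstep j hj
    have : (univ.filter (fun i => i < j ∧ G.Adj (e i) (e j))) = {i0, j0} := by
      ext i
      simp only [mem_filter, mem_univ, true_and, Finset.mem_insert, Finset.mem_singleton]
      constructor
      · rintro ⟨hlt, hadj'⟩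
        exact (hchar i hlt).mp hadj'.symm
      · rintro (rfl | rfl)
        · exact ⟨hi0, ((hchar i (by exact hi0)).mpr (Or.inl rfl)).symm⟩
        · exact ⟨hj0, ((hchar _ (by exact hj0)).mpr (Or.inr rfl)).symm⟩
    rw [hdlt]; simp only []; rw [this, Finset.card_insert_of_notMem (by simpa using hne), Finset.card_singleton]
  have hfilter3 : (univ.filter (fun j : Fin n => j.val < 3)) = {⟨0, by omega⟩, ⟨1, by omega⟩, ⟨2, by omega⟩} := by
    ext j
    simp only [mem_filter, mem_univ, true_and, Finset.mem_insert, Finset.mem_singleton, Fin.ext_iff]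
    omega
  have hcard3 : (univ.filter (fun j : Fin n => j.val < 3)).card = 3 := by
    rw [hfilter3]
    simp [Fin.ext_iff]
  have hsum1 : ∑ j ∈ univ.filter (fun j : Fin n => j.val < 3), dlt j = 3 := by
    rw [hfilter3]
    rw [Finset.sum_insert (by simp [Fin.ext_iff]), Finset.sum_insert (by simp [Fin.ext_iff]), Finset.sum_singleton]
    rw [hdlt_small _ (by simp), hdlt_small _ (by simp), hdlt_small _ (by simp)]
    simp
  have hcardbig : (univ.filter (fun j : Fin n => ¬ j.val < 3)).card = n - 3 := by
    have := Finset.card_filter_add_card_filter_not (s := (univ : Finset (Fin n))) (p := fun j => j.val < 3)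
    rw [hcard3, Finset.card_univ, Fintype.card_fin] at this
    omega
  have hsum2 : ∑ j ∈ univ.filter (fun j : Fin n => ¬ j.val < 3), dlt j = 2 * (n - 3) := by
    rw [Finset.sum_congr rfl (fun j hj => hdlt_big j (by simp at hj; omega))]
    rw [Finset.sum_const, hcardbig, smul_eq_mul, Nat.mul_comm]
  have htot : ∑ j : Fin n, dlt j = 2 * n - 3 := by
    rw [← Finset.sum_filter_add_sum_filter_not univ (fun j : Fin n => j.val < 3) dlt, hsum1, hsum2]
    omega
  rw [hsum]
  rw [Finset.sum_congr rfl (fun j _ => hdsplit j), Finset.sum_add_distrib, hswap, htot]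
  omega

lemma ncard_setOf_eq_filter {V : Type} [Fintype V] (p : V → Prop) [DecidablePred p] :
    Set.ncard {x | p x} = (Finset.univ.filter p).card := by
  rw [Set.ncard_eq_toFinset_card']; simp

lemma twoTree_chord {V : Type} [Fintype V] (G : SimpleGraph V) (h : IsTwoTree G)
    {w x y z : V} (hwx : G.Adj w x) (hxy : G.Adj x y) (hyz : G.Adj y z) (hzw : G.Adj z w)
    (hwy : w ≠ y) (hxz : x ≠ z) (hnwy : ¬ G.Adj w y) (hnxz : ¬ G.Adj x z) : False := by
  classical
  obtain ⟨h3, e, htri, hstep⟩ := h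
  have step : ∀ (k m1 m2 : Fin (Fintype.card V)), m1 < k → m2 < k → m1 ≠ m2 →
      G.Adj (e k) (e m1) → G.Adj (e k) (e m2) → 3 ≤ k.val → G.Adj (e m1) (e m2) := by
    intro k m1 m2 h1 h2 h12 a1 a2 hk
    obtain ⟨i0, j0, hi0, hj0, hne0, hadj0, hchar⟩ := hstep k hk
    rcases (hchar m1 h1).mp a1 with rfl | rfl <;> rcases (hchar m2 h2).mp a2 with rfl | rfl
    · exact absurd rfl h12
    · exact hadj0
    · exact hadj0.symm
    · exact absurd rfl h12
  set iw := e.symm w with hiw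
  set ix := e.symm x with hix
  set iy := e.symm y with hiy
  set iz := e.symm z with hiz
  have hew : e iw = w := e.apply_symm_apply w
  have hex : e ix = x := e.apply_symm_apply x
  have hey : e iy = y := e.apply_symm_apply y
  have hez : e iz = z := e.apply_symm_apply z
  have d1 : iw ≠ ix := fun hh => hwx.ne (e.symm.injective hh)
  have d2 : ix ≠ iy := fun hh => hxy.ne (e.symm.injective hh)
  have d3 : iy ≠ iz := fun hh => hyz.ne (e.symm.injective hh)
  have d4 : iw ≠ iz := fun hh => (hzw.ne (e.symm.injective hh.symm))
  have d5 : iw ≠ iy := fun hh => hwy (e.symm.injective hh)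
  have d6 : ix ≠ iz := fun hh => hxz (e.symm.injective hh)
  have hcard4 : ({iw, ix, iy, iz} : Finset (Fin (Fintype.card V))).card = 4 := by
    rw [Finset.card_insert_of_notMem (by simp [d1, d5, d4]),
      Finset.card_insert_of_notMem (by simp [d2, d6]),
      Finset.card_insert_of_notMem (by simp [d3]), Finset.card_singleton]
  obtain ⟨k, hk, hmax⟩ := Finset.exists_max_image ({iw, ix, iy, iz} : Finset (Fin (Fintype.card V)))
    id ⟨iw, by simp⟩
  have hk3 : 3 ≤ k.val := by
    have hsub : ({iw, ix, iy, iz} : Finset (Fin (Fintype.card V))) ⊆ Finset.Iic k := by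
      intro m hm; exact Finset.mem_Iic.mpr (hmax m hm)
    have := Finset.card_le_card hsub
    rw [hcard4, Fin.card_Iic] at this
    omega
  have lt_of_mem : ∀ m ∈ ({iw, ix, iy, iz} : Finset (Fin (Fintype.card V))), m ≠ k → m < k :=
    fun m hm hmk => lt_of_le_of_ne (hmax m hm) hmk
  simp only [Finset.mem_insert, Finset.mem_singleton] at hk
  rcases hk with rfl | rfl | rfl | rfl
  · have l1 : ix < iw := lt_of_mem ix (by simp) (fun hh => d1 hh.symm)
    have l2 : iz < iw := lt_of_mem iz (by simp) (fun hh => d4 hh.symm)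
    have := step iw ix iz l1 l2 d6 (by rw [hew, hex]; exact hwx) (by rw [hew, hez]; exact hzw.symm) hk3
    rw [hex, hez] at this
    exact hnxz this
  · have l1 : iw < ix := lt_of_mem iw (by simp) d1
    have l2 : iy < ix := lt_of_mem iy (by simp) (fun hh => d2 hh.symm)
    have := step ix iw iy l1 l2 d5 (by rw [hex, hew]; exact hwx.symm) (by rw [hex, hey]; exact hxy) hk3
    rw [hew, hey] at this
    exact hnwy this
  · have l1 : ix < iy := lt_of_mem ix (by simp) d2
    have l2 : iz < iy := lt_of_mem iz (by simp) (fun hh => d3 hh.symm)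
    have := step iy ix iz l1 l2 d6 (by rw [hey, hex]; exact hxy.symm) (by rw [hey, hez]; exact hyz) hk3
    rw [hex, hez] at this
    exact hnxz this
  · have l1 : iw < iz := lt_of_mem iw (by simp) d4
    have l2 : iy < iz := lt_of_mem iy (by simp) d3
    have := step iz iw iy l1 l2 d5 (by rw [hez, hew]; exact hzw) (by rw [hez, hey]; exact hyz.symm) hk3
    rw [hew, hey] at this
    exact hnwy this

lemma exists_nonnbr {V : Type} [Fintype V] [DecidableEq V] (G : SimpleGraph V) [DecidableRel G.Adj]
    (a : V) (hd : gdeg G a = Fintype.card V - 2) (h2 : 2 ≤ Fintype.card V) :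
    ∃ a' : V, a' ≠ a ∧ ∀ x, G.Adj a x ↔ (x ≠ a ∧ x ≠ a') := by
  have h1 : (Finset.univ.filter (G.Adj a)).card = Fintype.card V - 2 := by
    rw [← gdeg_eq]; exact hd
  have h2' : (Finset.univ.filter (fun x => ¬ G.Adj a x)).card = 2 := by
    have := Finset.card_filter_add_card_filter_not (s := (Finset.univ : Finset V))
      (p := G.Adj a)
    rw [h1, Finset.card_univ] at this
    omega
  have hamem : a ∈ Finset.univ.filter (fun x => ¬ G.Adj a x) := by simp
  obtain ⟨a', ha'⟩ := Finset.card_eq_one.mp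
    (show ((Finset.univ.filter (fun x => ¬ G.Adj a x)).erase a).card = 1 by
      rw [Finset.card_erase_of_mem hamem, h2'])
  have ha'mem : a' ∈ (Finset.univ.filter (fun x => ¬ G.Adj a x)).erase a :=
    ha' ▸ Finset.mem_singleton_self a'
  refine ⟨a', (Finset.mem_erase.mp ha'mem).1, fun x => ⟨fun hadj => ?_, fun ⟨hxa, hxa'⟩ => ?_⟩⟩
  · refine ⟨fun hh => G.loopless.irrefl a (hh ▸ hadj), fun hh => ?_⟩
    exact (Finset.mem_filter.mp (Finset.mem_of_mem_erase ha'mem)).2 (hh ▸ hadj)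
  · by_contra hnadj
    have : x ∈ (Finset.univ.filter (fun y => ¬ G.Adj a y)).erase a :=
      Finset.mem_erase.mpr ⟨hxa, by simp [hnadj]⟩
    rw [ha'] at this
    exact hxa' (Finset.mem_singleton.mp this)

lemma ncard_compl_eq {α : Type} [Fintype α] (s : Set α) :
    sᶜ.ncard = Fintype.card α - s.ncard := by
  classical
  rw [Set.ncard_eq_toFinset_card', Set.ncard_eq_toFinset_card', Set.toFinset_compl,
    Finset.card_compl]

theorem stmt9 {V : Type} [Fintype V] (G : SimpleGraph V) (n Δ : ℕ) (a b : V)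
    (hn : 6 ≤ n) (hcard : Fintype.card V = n)
    (h : IsStrongCentral G 2 Δ)
    (ha : gdeg G a = Δ) (hb : gdeg G b = Δ) (hab : a ≠ b)
    (hx2 : tail3 G Δ = 2) :
    ({s | s ≠ a ∧ s ≠ b ∧ G.Adj a s ∧ G.Adj b s}).ncard = n - 4 := by
  classical
  subst hcard
  obtain ⟨h2t, hmaxd, hr, hcore, htail⟩ := h
  have hab' : G.Adj a b := hcore a b ha hb hab
  have hsetΔ : {v | gdeg G v = Δ} = {a, b} := by
    refine (Set.eq_of_subset_of_ncard_le ?_ ?_ (Set.toFinite _)).symm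
    · rintro x (rfl | rfl)
      · exact ha
      · exact hb
    · rw [hr, Set.ncard_pair hab]
  have hΔ : Δ = Fintype.card V - 2 := by
    have key := twoTree_degsum G h2t
    have split1 := Finset.sum_filter_add_sum_filter_not Finset.univ
      (fun v => gdeg G v = Δ) (fun v => gdeg G v)
    have split2 := Finset.sum_filter_add_sum_filter_not
      (Finset.univ.filter (fun v => ¬ gdeg G v = Δ))
      (fun v => gdeg G v = 3) (fun v => gdeg G v)
    have c1 : (Finset.univ.filter (fun v => gdeg G v = Δ)).card = 2 := by
      rw [← ncard_setOf_eq_filter]; exact hr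
    have c2 : ((Finset.univ.filter (fun v => ¬ gdeg G v = Δ)).filter
        (fun v => gdeg G v = 3)).card = 2 := by
      rw [Finset.filter_filter, ← ncard_setOf_eq_filter]
      exact hx2
    have s1 : ∑ v ∈ Finset.univ.filter (fun v => gdeg G v = Δ), gdeg G v = 2 * Δ := by
      rw [Finset.sum_congr rfl (fun v hv => (Finset.mem_filter.mp hv).2), Finset.sum_const, c1,
        smul_eq_mul]
    have s2 : ∑ v ∈ (Finset.univ.filter (fun v => ¬ gdeg G v = Δ)).filter
        (fun v => gdeg G v = 3), gdeg G v = 6 := by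
      rw [Finset.sum_congr rfl (fun v hv => (Finset.mem_filter.mp hv).2), Finset.sum_const, c2,
        smul_eq_mul]
    have hval2 : ∀ v ∈ (Finset.univ.filter (fun v => ¬ gdeg G v = Δ)).filter
        (fun v => ¬ gdeg G v = 3), gdeg G v = 2 := by
      intro v hv
      simp only [Finset.mem_filter, Finset.mem_univ, true_and] at hv
      rcases htail v hv.1 with h2 | h3
      · exact h2
      · exact absurd h3 hv.2
    have s3 : ∑ v ∈ (Finset.univ.filter (fun v => ¬ gdeg G v = Δ)).filter
        (fun v => ¬ gdeg G v = 3), gdeg G v =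
        2 * ((Finset.univ.filter (fun v => ¬ gdeg G v = Δ)).filter
        (fun v => ¬ gdeg G v = 3)).card := by
      rw [Finset.sum_congr rfl hval2, Finset.sum_const, smul_eq_mul, Nat.mul_comm]
    have cc1 := Finset.card_filter_add_card_filter_not
      (s := (Finset.univ : Finset V)) (p := fun v => gdeg G v = Δ)
    have cc2 := Finset.card_filter_add_card_filter_not
      (s := Finset.univ.filter (fun v => ¬ gdeg G v = Δ)) (p := fun v => gdeg G v = 3)
    rw [Finset.card_univ, c1] at cc1
    rw [c2] at cc2
    have c3 : ((Finset.univ.filter (fun v => ¬ gdeg G v = Δ)).filter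
        (fun v => ¬ gdeg G v = 3)).card = Fintype.card V - 4 := by omega
    rw [← split2, s2, s3, c3] at split1
    rw [s1] at split1
    rw [← split1] at key
    omega
  have hda : gdeg G a = Fintype.card V - 2 := hΔ ▸ ha
  have hdb : gdeg G b = Fintype.card V - 2 := hΔ ▸ hb
  obtain ⟨a', ha'ne, speca⟩ := exists_nonnbr G a hda (by omega)
  obtain ⟨b', hb'ne, specb⟩ := exists_nonnbr G b hdb (by omega)
  have hba' : b ≠ a' := ((speca b).mp hab').2
  have hab'' : a ≠ b' := ((specb a).mp hab'.symm).2
  have hne : a' ≠ b' := by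
    by_contra hcc
    have hnac : ¬ G.Adj a a' := fun hadj => ((speca a').mp hadj).2 rfl
    have hnbc : ¬ G.Adj b a' := fun hadj => ((specb a').mp hadj).2 hcc
    have hdc : gdeg G a' ≠ Δ := by
      intro hh
      have hmem : a' ∈ ({a, b} : Set V) := hsetΔ ▸ hh
      rcases hmem with hc | hc
      · exact ha'ne hc
      · exact hba' hc.symm
    have hdc2 : 1 < (G.neighborSet a').ncard := by
      rcases htail a' hdc with h2 | h3
      · rw [gdeg] at h2; omega
      · rw [gdeg] at h3; omega
    obtain ⟨u, hu, v, hv, huv⟩ := (Set.one_lt_ncard (Set.toFinite _)).mp hdc2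
    have hcu : G.Adj a' u := hu
    have hcv : G.Adj a' v := hv
    have hua : u ≠ a := fun hh => hnac (hh ▸ hcu).symm
    have hub : u ≠ b := fun hh => hnbc (hh ▸ hcu).symm
    have hva : v ≠ a := fun hh => hnac (hh ▸ hcv).symm
    have hvb : v ≠ b := fun hh => hnbc (hh ▸ hcv).symm
    have hau : G.Adj a u := (speca u).mpr ⟨hua, hcu.ne'⟩
    have hbu : G.Adj b u := (specb u).mpr ⟨hub, hcc ▸ hcu.ne'⟩
    have hav : G.Adj a v := (speca v).mpr ⟨hva, hcv.ne'⟩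
    have hduΔ : gdeg G u ≠ Δ := by
      intro hh
      have hmem : u ∈ ({a, b} : Set V) := hsetΔ ▸ hh
      rcases hmem with hc | hc
      · exact hua hc
      · exact hub hc
    have habc_sub : ({a, b, a'} : Set V) ⊆ G.neighborSet u := by
      rintro x (rfl | rfl | rfl)
      · exact hau.symm
      · exact hbu.symm
      · exact hcu.symm
    have hcard3abc : ({a, b, a'} : Set V).ncard = 3 := by
      rw [Set.ncard_insert_of_notMem (by simp [hab, ha'ne.symm]) (Set.toFinite _),
        Set.ncard_insert_of_notMem (by simp [hba']) (Set.toFinite _), Set.ncard_singleton]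
    have hdu3 : (G.neighborSet u).ncard ≤ 3 := by
      rcases htail u hduΔ with h2 | h3
      · rw [gdeg] at h2; omega
      · rw [gdeg] at h3; omega
    have hNu : ({a, b, a'} : Set V) = G.neighborSet u :=
      Set.eq_of_subset_of_ncard_le habc_sub (by omega) (Set.toFinite _)
    have hnuv : ¬ G.Adj u v := by
      intro hadj
      have hvmem : v ∈ G.neighborSet u := hadj
      rw [← hNu] at hvmem
      rcases hvmem with hc | hc | hc
      · exact hva hc
      · exact hvb hc
      · exact hcv.ne' hc
    exact twoTree_chord G h2t hau hcu.symm.symm.symm hcv hav.symm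
      (fun hh => ha'ne hh.symm) huv hnac hnuv
  have hset : {s | s ≠ a ∧ s ≠ b ∧ G.Adj a s ∧ G.Adj b s} = ({a, b, a', b'} : Set V)ᶜ := by
    ext x
    simp only [Set.mem_setOf_eq, Set.mem_compl_iff, Set.mem_insert_iff, Set.mem_singleton_iff,
      speca x, specb x]
    tauto
  rw [hset, ncard_compl_eq]
  have h4 : ({a, b, a', b'} : Set V).ncard = 4 := by
    rw [Set.ncard_insert_of_notMem (by simp [hab, ha'ne.symm, hab'']) (Set.toFinite _),
      Set.ncard_insert_of_notMem (by simp [hba', hb'ne.symm]) (Set.toFinite _),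
      Set.ncard_insert_of_notMem (by simp [hne]) (Set.toFinite _), Set.ncard_singleton]
  rw [h4]
end
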